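/- arXiv:1407.2959 — 7 statements merged into one kernel-verified Lean document; each statement's English description precedes it below -/
import Mathlib

section
/- If α is an element of the ring Z[J⁻¹] of rationals whose denominators have prime factors only in a set J of primes, then the binomial coefficient C(α, n) = α(α-1)⋯(α-n+1)/n! also lies in Z[J⁻¹], for every natural number n. -/
/-!
A prime `p ∉ J` does not divide the denominator of `α`, so `α` is a `p`-adic integer. The ring
`ℤ_[p]` is a binomial ring, hence `C(α, n)` is a `p`-adic integer too, i.e. `p` does not divide
its denominator either.
-/

open Polynomial

lemma Padic.mulValuation_le_one_iff {p : ℕ} [Fact p.Prime] (x : ℚ_[p]) :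
    mulValuation x ≤ 1 ↔ ‖x‖ ≤ 1 := by
  by_cases hx : x = 0
  · simp [hx]
  · rw [mulValuation_toFun, if_neg hx, norm_le_one_iff_val_nonneg, ← WithZero.exp_zero,
      WithZero.exp_le_exp, neg_nonpos]

lemma Padic.norm_ratCast_le_one_iff {p : ℕ} [Fact p.Prime] (q : ℚ) :
    ‖(q : ℚ_[p])‖ ≤ 1 ↔ ¬ p ∣ q.den := by
  rw [← Rat.padicValuation_le_one_iff, ← comap_mulValuation_eq_padicValuation,
    Valuation.comap_apply, Rat.coe_castHom, mulValuation_le_one_iff]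

lemma Padic.norm_choose_le_one {p : ℕ} [Fact p.Prime] {x : ℚ_[p]} (hx : ‖x‖ ≤ 1) (n : ℕ) :
    ‖Ring.choose x n‖ ≤ 1 := by
  have h : ((Ring.choose ⟨x, hx⟩ n : ℤ_[p]) : ℚ_[p]) = Ring.choose x n :=
    Ring.map_choose PadicInt.Coe.ringHom _ n
  exact h ▸ PadicInt.norm_le_one _

lemma descPochhammer_int_smeval_eq_eval {R : Type*} [CommRing R] (r : R) (n : ℕ) :
    (descPochhammer ℤ n).smeval r = (descPochhammer R n).eval r := by
  rw [descPochhammer_smeval_eq_ascPochhammer, ascPochhammer_smeval_eq_eval,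
    ← descPochhammer_eval_eq_ascPochhammer]

lemma descPochhammer_eval_div_factorial {K : Type*} [Field K] [CharZero K] (a : K) (n : ℕ) :
    (descPochhammer K n).eval a / n.factorial = Ring.choose a n := by
  rw [Ring.choose_eq_smul, descPochhammer_int_smeval_eq_eval, smul_eq_mul, div_eq_inv_mul]

theorem stmt0_general (J : Set ℕ) (α : ℚ)
    (hα : ∀ p : ℕ, Nat.Prime p → p ∣ α.den → p ∈ J) (n : ℕ) :
    ∀ p : ℕ, Nat.Prime p →
      p ∣ ((descPochhammer ℚ n).eval α / (n.factorial : ℚ)).den → p ∈ J := by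
  intro p hp hden
  by_contra hpJ
  have : Fact p.Prime := ⟨hp⟩
  have hαp : ‖(α : ℚ_[p])‖ ≤ 1 :=
    (Padic.norm_ratCast_le_one_iff α).2 fun hpα ↦ hpJ (hα p hp hpα)
  have hcast : ((Ring.choose α n : ℚ) : ℚ_[p]) = Ring.choose (α : ℚ_[p]) n :=
    Ring.map_choose (Rat.castHom ℚ_[p]) α n
  rw [descPochhammer_eval_div_factorial] at hden
  exact (Padic.norm_ratCast_le_one_iff _).1 (hcast ▸ Padic.norm_choose_le_one hαp n) hden

/-- If `α ∈ ℤ[J⁻¹]` (the subring of `ℚ` of rationals whose denominators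
have prime factors only in the set `J` of primes), then the binomial coefficient
`C(α, n) = α(α-1)⋯(α-n+1)/n!` also lies in `ℤ[J⁻¹]`, for every natural number `n`. -/
theorem stmt0 (J : Set ℕ) (hJ : ∀ p ∈ J, Nat.Prime p) (α : ℚ)
    (hα : ∀ p : ℕ, Nat.Prime p → p ∣ α.den → p ∈ J) (n : ℕ) :
    ∀ p : ℕ, Nat.Prime p →
      p ∣ ((descPochhammer ℚ n).eval α / (n.factorial : ℚ)).den → p ∈ J :=
  stmt0_general J α hα n
end

section
/- In the ring Z[t, t⁻¹] of Laurent polynomials over the integers, for all natural numbers i and n ≥ 1, the element t^(n^(2i+1)) − 1 lies in the ideal (n, t−1)^i. -/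
/-!
Write `x^n - 1 = (x - 1) * (1 + x + ⋯ + x^(n-1))`. When `n ∈ I` and `x ≡ 1 mod I`, the second
factor is `≡ n ≡ 0 mod I`, so raising `x` to the `n`-th power raises the `I`-adic order of `x - 1`
by one. Starting from `t - 1 ∈ I = (n, t - 1)` this gives `t^(n^k) - 1 ∈ I^(k+1)`.
-/

namespace Ideal

variable {R : Type*} [CommRing R] {I : Ideal R} {x : R} {n : ℕ}

theorem geom_sum_mem_of_sub_one_mem (hn : (n : R) ∈ I) (hx : x - 1 ∈ I) :
    ∑ j ∈ Finset.range n, x ^ j ∈ I := by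
  have hx1 : Quotient.mk I x = 1 := by rw [← map_one (Quotient.mk I), Quotient.eq]; exact hx
  rw [← Quotient.eq_zero_iff_mem] at hn ⊢
  simpa [hx1] using hn

theorem pow_sub_one_mem_pow_succ {k : ℕ} (hn : (n : R) ∈ I) (hx : x - 1 ∈ I ^ (k + 1)) :
    x ^ n - 1 ∈ I ^ (k + 2) := by
  rw [← mul_geom_sum, pow_succ]
  exact mul_mem_mul hx (geom_sum_mem_of_sub_one_mem hn (pow_le_self k.succ_ne_zero hx))

theorem pow_pow_sub_one_mem_pow_succ (hn : (n : R) ∈ I) (hx : x - 1 ∈ I) (k : ℕ) :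
    x ^ n ^ k - 1 ∈ I ^ (k + 1) := by
  induction k with
  | zero => simpa using hx
  | succ k ih => simpa [pow_succ, pow_mul] using pow_sub_one_mem_pow_succ hn ih

end Ideal

open LaurentPolynomial

theorem stmt1_general (n i : ℕ) :
    (LaurentPolynomial.T ((n : ℤ) ^ (2 * i + 1)) : LaurentPolynomial ℤ) - 1 ∈
      (Ideal.span {((n : ℤ) : LaurentPolynomial ℤ),
        LaurentPolynomial.T 1 - 1}) ^ i := by
  set I : Ideal ℤ[T;T⁻¹] := Ideal.span {((n : ℤ) : ℤ[T;T⁻¹]), T 1 - 1}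
  have hn : (n : ℤ[T;T⁻¹]) ∈ I := Ideal.subset_span (by simp)
  have ht : (T 1 : ℤ[T;T⁻¹]) - 1 ∈ I := Ideal.subset_span (by simp)
  have key := Ideal.pow_pow_sub_one_mem_pow_succ hn ht (2 * i + 1)
  rw [T_pow, mul_one, Nat.cast_pow] at key
  exact Ideal.pow_le_pow_right (by omega) key

/-- In the ring `ℤ[t,t⁻¹]` of Laurent polynomials over the integers,
for all natural numbers `i` and `n ≥ 1`, the element `t^(n^(2i+1)) − 1` lies in the
ideal `(n, t−1)^i`. -/
theorem stmt1 (n i : ℕ) (hn : 1 ≤ n) :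
    (LaurentPolynomial.T ((n : ℤ) ^ (2 * i + 1)) : LaurentPolynomial ℤ) - 1 ∈
      (Ideal.span {((n : ℤ) : LaurentPolynomial ℤ),
        LaurentPolynomial.T 1 - 1}) ^ i :=
  stmt1_general n i
end

section
/- Let R be an associative ring whose characteristic divides n, and let r be an invertible element of R. Then for every natural number i, the element r^(n^(2i+1)) − 1 is divisible by (r−1)^i, i.e., r^(n^(2i+1)) − 1 ∈ (r−1)^i · R. -/
/-!
Write `y = x ^ n ^ i`. Since `x - 1 ∣ y - 1` and `y ^ n - 1 = (y - 1) (1 + y + ⋯ + y ^ (n - 1))`,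
where the second factor is `≡ n = 0` modulo `y - 1`, one gets `(y - 1) ^ 2 ∣ y ^ n - 1`. By
induction `(x - 1) ^ i ∣ x ^ n ^ i - 1` in any commutative ring with `n = 0`, and a ring element
`r` lives in the commutative subring generated by it.
-/

open Finset

section CommRing

variable {S : Type*} [CommRing S] {n : ℕ}

theorem sub_one_sq_dvd_pow_sub_one (hn : (n : S) = 0) (x : S) : (x - 1) ^ 2 ∣ x ^ n - 1 := by
  have h_sum : x - 1 ∣ ∑ k ∈ range n, x ^ k := by
    simpa using (dvd_geom_sum₂_iff_of_dvd_sub (n := n) (dvd_refl (x - 1))).mpr (by simp [hn])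
  rw [← geom_sum_mul, sq]
  exact mul_dvd_mul_right h_sum _

theorem sub_one_pow_dvd_pow_pow_sub_one_of_comm (hn : (n : S) = 0) (x : S) (i : ℕ) :
    (x - 1) ^ i ∣ x ^ n ^ i - 1 := by
  induction i with
  | zero => simp
  | succ i ih =>
    calc (x - 1) ^ (i + 1) = (x - 1) ^ i * (x - 1) := pow_succ _ _
      _ ∣ (x ^ n ^ i - 1) ^ 2 := sq (x ^ n ^ i - 1) ▸ mul_dvd_mul ih (sub_one_dvd_pow_sub_one _ _)
      _ ∣ (x ^ n ^ i) ^ n - 1 := sub_one_sq_dvd_pow_sub_one hn _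
      _ = x ^ n ^ (i + 1) - 1 := by rw [← pow_mul, pow_succ]

end CommRing

open scoped IsMulCommutative in
theorem sub_one_pow_dvd_pow_pow_sub_one {R : Type*} [Ring R] {n : ℕ} (hn : (n : R) = 0) (r : R)
    (i : ℕ) : (r - 1) ^ i ∣ r ^ n ^ i - 1 := by
  let S := Subring.closure ({r} : Set R)
  have : IsMulCommutative S := Subring.isMulCommutative_closure (by rintro x rfl y rfl; rfl)
  let s : S := ⟨r, Subring.subset_closure rfl⟩
  have hnS : (n : S) = 0 := Subtype.ext (by simpa using hn)
  simpa using map_dvd S.subtype (sub_one_pow_dvd_pow_pow_sub_one_of_comm hnS s i)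

theorem stmt2_general (R : Type*) [Ring R] (n : ℕ) (hchar : (n : R) = 0)
    (r : R) (i : ℕ) :
    (r - 1) ^ i ∣ r ^ (n ^ (2 * i + 1)) - 1 :=
  (sub_one_pow_dvd_pow_pow_sub_one hchar r i).trans
    (dvd_pow_sub_one_of_dvd (pow_dvd_pow n (by omega)))

/-- Let `R` be an associative ring whose characteristic divides `n`
(i.e. `n·1 = 0` in `R`), and let `r` be an invertible element of `R`. Then for every
natural number `i`, the element `r^(n^(2i+1)) − 1` is divisible by `(r−1)^i`. -/
theorem stmt2 (R : Type*) [Ring R] (n : ℕ) (hchar : (n : R) = 0)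
    (r : R) (hr : IsUnit r) (i : ℕ) :
    (r - 1) ^ i ∣ r ^ (n ^ (2 * i + 1)) - 1 :=
  stmt2_general R n hchar r i
end

section
/- Let Λ be a commutative Noetherian ring with ideal I, and let Λ̃ be a Zariski ring with respect to the ideal Ĩ = φ(I)·Λ̃ for a flat ring homomorphism φ: Λ → Λ̃ inducing isomorphisms Λ/Iⁿ ≅ Λ̃/Ĩⁿ. If M is a Λ-module with cl(Ann_Λ M) ⊇ Iⁿ (where cl denotes I-adic closure of the ideal), then M·Iⁿ = M·I^(n+1) and there is a short exact sequence 0 → M·Iⁿ → M → M⊗_Λ Λ̃ → 0; in particular M⊗_Λ Λ̃ ≅ M/M·Iⁿ. -/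
/-!
By Krull's intersection theorem every `a ∈ Iⁿ ⊆ cl(Ann M)` satisfies `(1 + i) a ∈ Ann M` for
some `i ∈ I`. As `1 + i` becomes a unit in `T`, `a` kills `M ⊗ T`, so by right exactness
`M ⊗ T ≅ M ⊗ T/IⁿT ≅ M ⊗ Λ/Iⁿ ≅ M/IⁿM`, compatibly with `φ_M` and the projection `M → M/IⁿM`.
The equality `IⁿM = Iⁿ⁺¹M` is the special case `Iⁿ ⊆ Ann M + Iⁿ⁺¹` of the hypothesis.
-/

open TensorProduct

theorem Ideal.exists_one_add_mul_mem_of_mem_iInf_sup_pow {R : Type*} [CommRing R]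
    [IsNoetherianRing R] {I J : Ideal R} {a : R} (ha : a ∈ ⨅ m : ℕ, J ⊔ I ^ m) :
    ∃ i ∈ I, (1 + i) * a ∈ J := by
  let q := Ideal.Quotient.mk J
  have hqa : q a ∈ ⨅ m : ℕ, (I.map q) ^ m • (⊤ : Submodule (R ⧸ J) (R ⧸ J)) := by
    refine Submodule.mem_iInf _ |>.2 fun m => ?_
    obtain ⟨b, hb, c, hc, rfl⟩ := Submodule.mem_sup.mp (Submodule.mem_iInf _ |>.1 ha m)
    rw [smul_eq_mul, Ideal.mul_top, map_add, Ideal.Quotient.eq_zero_iff_mem.mpr hb, zero_add,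
      ← Ideal.map_pow]
    exact Ideal.mem_map_of_mem q hc
  obtain ⟨⟨r, hr⟩, hra⟩ := (Ideal.mem_iInf_smul_pow_eq_bot_iff (I.map q) (q a)).mp hqa
  obtain ⟨i, hi, rfl⟩ := (Ideal.mem_map_iff_of_surjective q Ideal.Quotient.mk_surjective).mp hr
  refine ⟨-i, I.neg_mem hi, ?_⟩
  have hia : q i * q a = q a := hra
  rw [← Ideal.Quotient.eq_zero_iff_mem, map_mul, map_add, map_one, map_neg, add_mul, one_mul,
    neg_mul, hia, add_neg_cancel]

theorem Submodule.smul_top_le_of_le_annihilator_sup {R M : Type*} [CommRing R] [AddCommGroup M]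
    [Module R M] {J K : Ideal R} (h : J ≤ (⊤ : Submodule R M).annihilator ⊔ K) :
    J • (⊤ : Submodule R M) ≤ K • ⊤ :=
  calc J • (⊤ : Submodule R M)
      _ ≤ ((⊤ : Submodule R M).annihilator ⊔ K) • ⊤ := smul_mono_left h
      _ = K • ⊤ := by rw [sup_smul, annihilator_smul, bot_sup_eq]

theorem TensorProduct.tmul_eq_zero_of_smul_eq_zero {R S M : Type*} [CommSemiring R]
    [CommSemiring S] [Algebra R S] [AddCommMonoid M] [Module R M] {r : R} {m : M}
    (hr : IsUnit (algebraMap R S r)) (hm : r • m = 0) (s : S) : m ⊗ₜ[R] s = 0 := by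
  obtain ⟨u, hu⟩ := hr
  calc m ⊗ₜ[R] s = m ⊗ₜ[R] (r • (↑u⁻¹ * s)) := by
        rw [_root_.Algebra.smul_def, ← hu, ← mul_assoc, u.mul_inv, one_mul]
    _ = 0 := by rw [← smul_tmul, hm, zero_tmul]

theorem smul_tmul_eq_zero_of_mem_iInf_annihilator_sup_pow {R S M : Type*} [CommRing R]
    [IsNoetherianRing R] [CommRing S] [Algebra R S] [AddCommGroup M] [Module R M] {I : Ideal R}
    (hI : ∀ x ∈ I.map (algebraMap R S), IsUnit (1 + x)) {a : R}
    (ha : a ∈ ⨅ m : ℕ, (⊤ : Submodule R M).annihilator ⊔ I ^ m) (m : M) (s : S) :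
    (a • m) ⊗ₜ[R] s = 0 := by
  obtain ⟨i, hi, hia⟩ := Ideal.exists_one_add_mul_mem_of_mem_iInf_sup_pow ha
  refine tmul_eq_zero_of_smul_eq_zero (r := 1 + i) ?_ ?_ s
  · simpa using hI _ (Ideal.mem_map_of_mem _ hi)
  · rw [← mul_smul]
    exact Submodule.mem_annihilator.mp hia m trivial

theorem LinearMap.lTensor_mkQ_smul_top_bijective {R M N : Type*} [CommRing R] [AddCommGroup M]
    [Module R M] [AddCommGroup N] [Module R N] {J : Ideal R}
    (hJ : ∀ a ∈ J, ∀ (m : M) (n : N), (a • m) ⊗ₜ[R] n = 0) :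
    Function.Bijective ((J • (⊤ : Submodule R N)).mkQ.lTensor M) := by
  refine ⟨?_, lTensor_surjective M (Submodule.mkQ_surjective _)⟩
  rw [← ker_eq_bot, lTensor_mkQ, range_eq_bot]
  refine TensorProduct.ext' fun m ⟨n, hn⟩ => ?_
  have : J • (⊤ : Submodule R N) ≤ ker (TensorProduct.mk R M N m) :=
    Submodule.smul_le.2 fun a ha n _ => by rw [mem_ker, mk_apply, ← smul_tmul]; exact hJ a ha m n
  simpa using this hn

section QuotSMulTopEquiv

variable {R S : Type*} [CommRing R] [CommRing S] [Algebra R S] {J : Ideal R} {K : Ideal S}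
  (hK : J.map (algebraMap R S) = K) {hJK : J ≤ K.comap (algebraMap R S)}
  (h : Function.Bijective (Ideal.quotientMap K (algebraMap R S) hJK))

noncomputable def Ideal.quotSMulTopEquivOfBijective :
    (S ⧸ (J • ⊤ : Submodule R S)) ≃ₗ[R] R ⧸ J :=
  Submodule.quotEquivOfEq _ _ (by rw [Ideal.smul_top_eq_map, hK]) ≪≫ₗ
    Submodule.Quotient.restrictScalarsEquiv R K ≪≫ₗ
    (AlgEquiv.ofBijective (Ideal.quotientMapₐ K (Algebra.ofId R S) hJK) h).symm.toLinearEquiv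

theorem Ideal.quotSMulTopEquivOfBijective_mk_one :
    quotSMulTopEquivOfBijective hK h (Submodule.Quotient.mk 1) = 1 := by
  simp [quotSMulTopEquivOfBijective]

end QuotSMulTopEquiv

/-- Let `Λ` be a commutative Noetherian ring with ideal `I`, and let
`Λ̃` (= `T`) be a Zariski ring with respect to the ideal `Ĩ = φ(I)·Λ̃` for a flat ring
homomorphism `φ : Λ → Λ̃` inducing isomorphisms `Λ/Iⁿ ≅ Λ̃/Ĩⁿ`. If `M` is a
`Λ`-module with `cl(Ann_Λ M) ⊇ Iⁿ` (closure in the `I`-adic topology), then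
`M·Iⁿ = M·I^(n+1)` and there is a short exact sequence
`0 → M·Iⁿ → M → M ⊗_Λ Λ̃ → 0` (i.e. `φ_M : M → M ⊗_Λ Λ̃, m ↦ m ⊗ 1`, is surjective
with kernel `M·Iⁿ`); in particular `M ⊗_Λ Λ̃ ≅ M/M·Iⁿ`. -/
theorem stmt3 (Λ : Type) [CommRing Λ] [IsNoetherianRing Λ] (I : Ideal Λ)
    (T : Type) [CommRing T] [Algebra Λ T]
    -- `T` is a Zariski ring w.r.t. `Ĩ = φ(I)T`: every element of `1 + Ĩ` is a unit
    (hzar : ∀ x ∈ I.map (algebraMap Λ T), IsUnit (1 + x))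
    -- `φ` induces isomorphisms `Λ/Iᵐ ≅ T/Ĩᵐ`
    (hiso : ∀ m : ℕ, Function.Bijective
      (Ideal.quotientMap (I := I ^ m) ((I.map (algebraMap Λ T)) ^ m) (algebraMap Λ T)
        (by rw [← Ideal.map_pow]; exact Ideal.le_comap_map)))
    (M : Type) [AddCommGroup M] [Module Λ M] (n : ℕ)
    (hcl : (I ^ n : Ideal Λ) ≤ ⨅ m : ℕ, ((⊤ : Submodule Λ M).annihilator ⊔ I ^ m)) :
    I ^ n • (⊤ : Submodule Λ M) = I ^ (n + 1) • ⊤ ∧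
    Function.Surjective ((TensorProduct.mk Λ M T).flip 1) ∧
    LinearMap.ker ((TensorProduct.mk Λ M T).flip 1) = I ^ n • (⊤ : Submodule Λ M) ∧
    Nonempty ((M ⊗[Λ] T) ≃ₗ[Λ] M ⧸ (I ^ n • (⊤ : Submodule Λ M))) := by
  have hkill : ∀ a ∈ I ^ n, ∀ (m : M) (t : T), (a • m) ⊗ₜ[Λ] t = 0 :=
    fun a ha => smul_tmul_eq_zero_of_mem_iInf_annihilator_sup_pow hzar (hcl ha)
  let e : (M ⊗[Λ] T) ≃ₗ[Λ] M ⧸ (I ^ n • (⊤ : Submodule Λ M)) :=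
    LinearEquiv.ofBijective _ (LinearMap.lTensor_mkQ_smul_top_bijective hkill) ≪≫ₗ
      LinearEquiv.lTensor M
        (Ideal.quotSMulTopEquivOfBijective (Ideal.map_pow _ _ _) (hiso n)) ≪≫ₗ
      tensorQuotEquivQuotSMul M (I ^ n)
  have he : ((TensorProduct.mk Λ M T).flip 1) = e.symm.toLinearMap ∘ₗ Submodule.mkQ _ := by
    ext m
    apply e.injective
    simp [e, Ideal.quotSMulTopEquivOfBijective_mk_one]
  refine ⟨le_antisymm ?_ ?_, ?_, ?_, ⟨e⟩⟩
  · exact Submodule.smul_top_le_of_le_annihilator_sup (hcl.trans (iInf_le _ (n + 1)))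
  · exact Submodule.smul_mono_left (Ideal.pow_le_pow_right n.le_succ)
  · rw [he]
    exact e.symm.surjective.comp (Submodule.mkQ_surjective _)
  · rw [he, LinearEquiv.ker_comp, Submodule.ker_mkQ]
end

section
/- Let Λ be a commutative Noetherian ring, I an ideal, and M, N Λ-modules such that cl(Ann_Λ M + Ann_Λ N) ⊇ Iⁿ. Let φ: Λ → Λ̃ satisfy: Λ̃ is Zariski with respect to Ĩ = φ(I)Λ̃, φ is flat, and φ induces Λ/Iᵐ ≅ Λ̃/Ĩᵐ for all m. Then (M⊗_Λ N)Iⁿ = (M⊗_Λ N)I^(n+1), and the natural maps give isomorphisms M̃ ⊗_Λ Ñ ≅ M̃ ⊗_Λ̃ Ñ ≅ (M⊗_Λ N)⊗_Λ Λ̃ ≅ (M⊗_Λ N)/(M⊗_Λ N)Iⁿ ≅ (M/MIⁿ) ⊗_Λ (N/NIⁿ). -/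
/-!
Put `J = Ann M + Ann N`; it kills `M ⊗ N` and every module built from `M`, `N` by base change
and tensor products. The closure hypothesis gives `Iⁿ ⊆ J + Iⁿ⁺¹`, which on `M ⊗ N` is the first
claim. Pushed to `Λ̃`, where `Ĩ` lies in the Jacobson radical, Nakayama upgrades it to
`Ĩⁿ ⊆ JΛ̃`, so `Ĩⁿ` kills all the base-changed modules. As `Λ → Λ̃/Ĩⁿ` is onto, every `t ∈ Λ̃`
then acts on them like some `a ∈ Λ`: this makes `Λ`-tensor products of such `Λ̃`-modules
`Λ̃`-balanced, and identifies `Λ̃ ⊗ (M ⊗ N)` with `(Λ/Iⁿ) ⊗ (M ⊗ N) = (M ⊗ N)/Iⁿ(M ⊗ N)`.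
-/

open TensorProduct

section Annihilator

variable {R : Type*} [CommSemiring R] {M N : Type*} [AddCommMonoid M] [Module R M]
  [AddCommMonoid N] [Module R N]

theorem Module.annihilator_le_annihilator_tensorProduct_left :
    Module.annihilator R M ≤ Module.annihilator R (M ⊗[R] N) := by
  intro r hr
  rw [Module.mem_annihilator] at hr ⊢
  intro z
  induction z using TensorProduct.induction_on with
  | zero => exact smul_zero r
  | tmul m n => rw [smul_tmul', hr, zero_tmul]
  | add x y hx hy => rw [smul_add, hx, hy, add_zero]

theorem Module.annihilator_le_annihilator_tensorProduct_right :
    Module.annihilator R N ≤ Module.annihilator R (M ⊗[R] N) :=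
  (TensorProduct.comm R N M).annihilator_eq ▸ annihilator_le_annihilator_tensorProduct_left

theorem Module.annihilator_sup_le_annihilator_tensorProduct :
    Module.annihilator R M ⊔ Module.annihilator R N ≤ Module.annihilator R (M ⊗[R] N) :=
  sup_le annihilator_le_annihilator_tensorProduct_left
    annihilator_le_annihilator_tensorProduct_right

theorem Module.map_annihilator_le {S : Type*} [CommSemiring S] [Algebra R S] [Module S M]
    [IsScalarTower R S M] :
    (Module.annihilator R M).map (algebraMap R S) ≤ Module.annihilator S M :=
  Ideal.map_le_iff_le_comap.mpr Module.comap_annihilator.ge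

theorem Submodule.smul_top_le_of_le_annihilator_sup_s4 {𝔞 𝔟 : Ideal R}
    (h : 𝔞 ≤ Module.annihilator R M ⊔ 𝔟) : 𝔞 • (⊤ : Submodule R M) ≤ 𝔟 • ⊤ :=
  calc 𝔞 • (⊤ : Submodule R M) ≤ (Module.annihilator R M ⊔ 𝔟) • ⊤ := smul_mono_left h
    _ = 𝔟 • ⊤ := by
      rw [Submodule.sup_smul, ← Submodule.annihilator_top, Submodule.annihilator_smul, bot_sup_eq]

end Annihilator

theorem Ideal.le_jacobson_bot_of_isUnit_one_add {R : Type*} [CommRing R] {𝔞 : Ideal R}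
    (h : ∀ x ∈ 𝔞, IsUnit (1 + x)) : 𝔞 ≤ jacobson ⊥ := fun x hx =>
  mem_jacobson_bot.mpr fun y => add_comm 1 (x * y) ▸ h _ (𝔞.mul_mem_right y hx)

theorem Ideal.pow_le_of_le_sup_pow_succ {R : Type*} [CommRing R] {𝔞 𝔟 : Ideal R} {n : ℕ}
    (hfg : (𝔞 ^ n).FG) (hjac : 𝔞 ≤ jacobson ⊥) (h : 𝔞 ^ n ≤ 𝔟 ⊔ 𝔞 ^ (n + 1)) : 𝔞 ^ n ≤ 𝔟 :=
  Submodule.le_of_le_smul_of_le_jacobson_bot hfg hjac (by rwa [pow_succ', ← smul_eq_mul] at h)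

theorem Ideal.exists_sub_mem_of_surjective_quotientMap {R S : Type*} [CommRing R] [CommRing S]
    {𝔞 : Ideal R} {𝔟 : Ideal S} {f : R →+* S} {h : 𝔞 ≤ 𝔟.comap f}
    (hf : Function.Surjective (quotientMap 𝔟 f h)) (s : S) : ∃ r, s - f r ∈ 𝔟 := by
  obtain ⟨r, hr⟩ := hf (Quotient.mk 𝔟 s)
  obtain ⟨r, rfl⟩ := Quotient.mk_surjective r
  rw [quotientMap_mk, Quotient.eq] at hr
  exact ⟨r, by simpa using neg_mem hr⟩

theorem TensorProduct.compatibleSMul_of_forall_exists_sub_mem {R S P Q : Type*} [CommRing R]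
    [CommRing S] [Algebra R S] [AddCommGroup P] [Module R P] [Module S P] [IsScalarTower R S P]
    [AddCommGroup Q] [Module R Q] [Module S Q] [IsScalarTower R S Q]
    (h : ∀ s : S, ∃ r : R, s - algebraMap R S r ∈
      (Module.annihilator R P ⊔ Module.annihilator R Q).map (algebraMap R S)) :
    CompatibleSMul R S P Q where
  smul_tmul s p q := by
    obtain ⟨r, hr⟩ := h s
    have hP : (s - algebraMap R S r) ∈ Module.annihilator S (P ⊗[R] Q) :=
      Module.map_annihilator_le
        (Ideal.map_mono Module.annihilator_sup_le_annihilator_tensorProduct hr)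
    have hQ : (s - algebraMap R S r) ∈ Module.annihilator S (Q ⊗[R] P) :=
      Module.map_annihilator_le
        (Ideal.map_mono ((sup_comm _ _).trans_le
          Module.annihilator_sup_le_annihilator_tensorProduct) hr)
    have hleft : ((s - algebraMap R S r) • p) ⊗ₜ[R] q = 0 := by
      rw [← smul_tmul', Module.mem_annihilator.mp hP]
    have hright : p ⊗ₜ[R] ((s - algebraMap R S r) • q) = 0 := by
      rw [← TensorProduct.comm_tmul R, ← smul_tmul', Module.mem_annihilator.mp hQ, map_zero]
    rw [sub_smul, tmul_sub, sub_eq_zero] at hright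
    rw [sub_smul, sub_tmul, sub_eq_zero] at hleft
    rw [hleft, hright, algebraMap_smul, algebraMap_smul, smul_tmul]

theorem TensorProduct.exists_equiv_quotient_smul_top {R S K : Type*} [CommRing R] [CommRing S]
    [Algebra R S] [AddCommGroup K] [Module R K] {𝔞 : Ideal R} {𝔟 : Ideal S}
    {h : 𝔞 ≤ 𝔟.comap (algebraMap R S)}
    (hbij : Function.Bijective (Ideal.quotientMap 𝔟 (algebraMap R S) h))
    (hann : 𝔟 ≤ Module.annihilator S (S ⊗[R] K)) :
    ∃ e : (S ⊗[R] K) ≃ₗ[R] K ⧸ 𝔞 • (⊤ : Submodule R K),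
      ∀ x : K, e (1 ⊗ₜ x) = Submodule.Quotient.mk x := by
  have hker : 𝔞 • (⊤ : Submodule R K) ≤ LinearMap.ker (TensorProduct.mk R S K 1) := by
    rw [Submodule.smul_le]
    intro r hr x _
    rw [LinearMap.mem_ker, mk_apply, tmul_smul, ← algebraMap_smul S]
    exact Module.mem_annihilator.mp (hann (h hr)) _
  let g := (𝔞 • (⊤ : Submodule R K)).liftQ _ hker
  have hg : ∀ x, g (Submodule.Quotient.mk x) = 1 ⊗ₜ x := fun _ => rfl
  let ψ : (R ⧸ 𝔞) ≃ₗ[R] S ⧸ 𝔟 :=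
    LinearEquiv.ofBijective (Ideal.quotientMapₐ 𝔟 (Algebra.ofId R S) h).toLinearMap hbij
  let F := (quotTensorEquivQuotSMul K 𝔞).toLinearMap ∘ₗ ψ.symm.toLinearMap.rTensor K ∘ₗ
    (Ideal.Quotient.mkₐ R 𝔟).toLinearMap.rTensor K
  have hinj : Function.LeftInverse F g := by
    intro q
    obtain ⟨x, rfl⟩ := Submodule.Quotient.mk_surjective _ q
    have hψ : ψ.symm 1 = 1 :=
      ψ.symm_apply_eq.mpr (map_one (Ideal.quotientMapₐ 𝔟 (Algebra.ofId R S) h)).symm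
    simp [F, hg, hψ]
  have hsurj : Function.Surjective g := by
    intro z
    induction z using TensorProduct.induction_on with
    | zero => exact ⟨0, map_zero g⟩
    | tmul s x =>
      obtain ⟨r, hr⟩ := Ideal.exists_sub_mem_of_surjective_quotientMap hbij.2 s
      refine ⟨Submodule.Quotient.mk (r • x), ?_⟩
      have h0 : (s - algebraMap R S r) • ((1 : S) ⊗ₜ[R] x) = 0 :=
        Module.mem_annihilator.mp (hann hr) _
      rw [smul_tmul', smul_eq_mul, mul_one, sub_tmul, sub_eq_zero] at h0
      rw [hg, tmul_smul, smul_tmul', ← Algebra.algebraMap_eq_smul_one, h0]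
    | add z w hz hw =>
      obtain ⟨a, rfl⟩ := hz
      obtain ⟨b, rfl⟩ := hw
      exact ⟨a + b, map_add g a b⟩
  exact ⟨(LinearEquiv.ofBijective g ⟨hinj.injective, hsurj⟩).symm, fun x =>
    (LinearEquiv.symm_apply_eq _).mpr (hg x).symm⟩

theorem TensorProduct.smul_top_eq_range_map_sup {R M N : Type*} [CommRing R] [AddCommGroup M]
    [Module R M] [AddCommGroup N] [Module R N] (𝔞 : Ideal R) :
    𝔞 • (⊤ : Submodule R (M ⊗[R] N)) =
      LinearMap.range (map (𝔞 • (⊤ : Submodule R M)).subtype LinearMap.id) ⊔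
        LinearMap.range (map LinearMap.id (𝔞 • (⊤ : Submodule R N)).subtype) := by
  refine le_antisymm (le_sup_of_le_left ?_) (sup_le ?_ ?_)
  · rw [Submodule.smul_le]
    rintro r hr z -
    induction z using TensorProduct.induction_on with
    | zero => rw [smul_zero]; exact zero_mem _
    | tmul m n =>
      exact ⟨(⟨r • m, Submodule.smul_mem_smul hr trivial⟩ : ↥(𝔞 • (⊤ : Submodule R M))) ⊗ₜ n,
        by rw [map_tmul, smul_tmul']; rfl⟩
    | add z w hz hw => rw [smul_add]; exact add_mem hz hw
  · rw [range_map_eq_span_tmul, Submodule.span_le]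
    rintro _ ⟨m, n, rfl⟩
    exact Submodule.smul_top_le_comap_smul_top 𝔞 ((TensorProduct.mk R M N).flip n) m.2
  · rw [range_map_eq_span_tmul, Submodule.span_le]
    rintro _ ⟨m, n, rfl⟩
    exact Submodule.smul_top_le_comap_smul_top 𝔞 (TensorProduct.mk R M N m) n.2

/-- Let `Λ` be a commutative Noetherian ring, `I` an ideal, and `M`, `N`
`Λ`-modules with `cl(Ann_Λ M + Ann_Λ N) ⊇ Iⁿ`. Let `φ : Λ → Λ̃` (= `T`) satisfy:
`Λ̃` is Zariski with respect to `Ĩ = φ(I)Λ̃`, `φ` is flat, and `φ` induces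
`Λ/Iᵐ ≅ Λ̃/Ĩᵐ` for all `m`. Then `(M ⊗_Λ N)Iⁿ = (M ⊗_Λ N)I^(n+1)`, and the natural
maps give isomorphisms
`M̃ ⊗_Λ Ñ ≅ M̃ ⊗_Λ̃ Ñ ≅ (M ⊗_Λ N) ⊗_Λ Λ̃ ≅ (M ⊗_Λ N)/(M ⊗_Λ N)Iⁿ ≅ (M/MIⁿ) ⊗_Λ (N/NIⁿ)`
(each isomorphism characterized by where it sends the images of the canonical maps,
with `M̃ = Λ̃ ⊗_Λ M`). -/
theorem stmt4 (Λ : Type) [CommRing Λ] [IsNoetherianRing Λ] (I : Ideal Λ)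
    (T : Type) [CommRing T] [Algebra Λ T]
    (hzar : ∀ x ∈ I.map (algebraMap Λ T), IsUnit (1 + x))
    (hiso : ∀ m : ℕ, Function.Bijective
      (Ideal.quotientMap (I := I ^ m) ((I.map (algebraMap Λ T)) ^ m) (algebraMap Λ T)
        (by rw [← Ideal.map_pow]; exact Ideal.le_comap_map)))
    (M : Type) [AddCommGroup M] [Module Λ M]
    (N : Type) [AddCommGroup N] [Module Λ N] (n : ℕ)
    (hcl : (I ^ n : Ideal Λ) ≤ ⨅ m : ℕ,
      (((⊤ : Submodule Λ M).annihilator ⊔ (⊤ : Submodule Λ N).annihilator) ⊔ I ^ m)) :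
    I ^ n • (⊤ : Submodule Λ (M ⊗[Λ] N)) = I ^ (n + 1) • ⊤ ∧
    (∃ e₁ : ((T ⊗[Λ] M) ⊗[Λ] (T ⊗[Λ] N)) ≃ₗ[Λ] ((T ⊗[Λ] M) ⊗[T] (T ⊗[Λ] N)),
      ∀ (x : T ⊗[Λ] M) (y : T ⊗[Λ] N), e₁ (x ⊗ₜ y) = x ⊗ₜ y) ∧
    (∃ e₂ : (T ⊗[Λ] (M ⊗[Λ] N)) ≃ₗ[Λ] ((T ⊗[Λ] M) ⊗[T] (T ⊗[Λ] N)),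
      ∀ (t : T) (m : M) (x : N), e₂ (t ⊗ₜ (m ⊗ₜ x)) = (t ⊗ₜ m) ⊗ₜ ((1 : T) ⊗ₜ x)) ∧
    (∃ e₃ : (T ⊗[Λ] (M ⊗[Λ] N)) ≃ₗ[Λ] ((M ⊗[Λ] N) ⧸ (I ^ n • (⊤ : Submodule Λ (M ⊗[Λ] N)))),
      ∀ x : M ⊗[Λ] N, e₃ ((1 : T) ⊗ₜ x) = Submodule.Quotient.mk x) ∧
    (∃ e₄ : ((M ⊗[Λ] N) ⧸ (I ^ n • (⊤ : Submodule Λ (M ⊗[Λ] N)))) ≃ₗ[Λ]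
        ((M ⧸ (I ^ n • (⊤ : Submodule Λ M))) ⊗[Λ] (N ⧸ (I ^ n • (⊤ : Submodule Λ N)))),
      ∀ (m : M) (x : N), e₄ (Submodule.Quotient.mk (m ⊗ₜ x)) =
        Submodule.Quotient.mk m ⊗ₜ Submodule.Quotient.mk x) := by
  set J := Module.annihilator Λ M ⊔ Module.annihilator Λ N
  have hJ (m : ℕ) : I ^ n ≤ J ⊔ I ^ m := by
    simpa only [Submodule.annihilator_top] using hcl.trans (iInf_le _ m)
  have hNak : (I.map (algebraMap Λ T)) ^ n ≤ J.map (algebraMap Λ T) := by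
    refine Ideal.pow_le_of_le_sup_pow_succ ?_ (Ideal.le_jacobson_bot_of_isUnit_one_add hzar) ?_
    · rw [← Ideal.map_pow]
      exact Ideal.FG.map (IsNoetherian.noetherian _) _
    · simpa only [← Ideal.map_pow, ← Ideal.map_sup] using Ideal.map_mono (hJ (n + 1))
  have hJK : J ≤ Module.annihilator Λ (M ⊗[Λ] N) :=
    Module.annihilator_sup_le_annihilator_tensorProduct
  refine ⟨?_, ?_, ?_, ?_, ?_⟩
  · exact le_antisymm (Submodule.smul_top_le_of_le_annihilator_sup_s4
      ((hJ (n + 1)).trans (sup_le_sup_right hJK _)))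
      (Submodule.smul_mono_left (Ideal.pow_le_pow_right n.le_succ))
  · have : CompatibleSMul Λ T (T ⊗[Λ] M) (T ⊗[Λ] N) :=
      compatibleSMul_of_forall_exists_sub_mem fun t =>
        (Ideal.exists_sub_mem_of_surjective_quotientMap (hiso n).2 t).imp fun _ ha =>
          Ideal.map_mono (sup_le_sup Module.annihilator_le_annihilator_tensorProduct_right
            Module.annihilator_le_annihilator_tensorProduct_right) (hNak ha)
    exact ⟨(equivOfCompatibleSMul Λ T Λ _ _).symm, fun _ _ => rfl⟩
  · exact ⟨(AlgebraTensorModule.distribBaseChange Λ T M N).restrictScalars Λ, fun _ _ _ => rfl⟩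
  · have hkill : (I.map (algebraMap Λ T)) ^ n ≤ Module.annihilator T (T ⊗[Λ] (M ⊗[Λ] N)) :=
      hNak.trans <| (Ideal.map_mono <|
        hJK.trans Module.annihilator_le_annihilator_tensorProduct_right).trans
          Module.map_annihilator_le
    exact exists_equiv_quotient_smul_top (hiso n) hkill
  · refine ⟨Submodule.quotEquivOfEq _ _ (smul_top_eq_range_map_sup _) ≪≫ₗ
      (quotientTensorQuotientEquiv _ _).symm, fun m x => ?_⟩
    rw [LinearEquiv.trans_apply, Submodule.quotEquivOfEq_mk]
    exact quotientTensorQuotientEquiv_symm_apply_mk_tmul _ _ m x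
end

section
/- Let G be a metabelian group with metabelian decomposition 0 → M → G → A → 1, A a finitely generated abelian group, and let Iₙ = ker(Z[A] → Z/n). Let H be a normal subgroup of G with H ∩ M ⊆ N for a Z[A]-submodule N of M. Then [pₙ(H), G] ⊆ N·Iₙ, where pₙ(H) is the normal subgroup of G generated by {hⁿ : h ∈ H}. -/
/-!
Modulo `K = pₙ(N)·[N,G]` the subgroup `N` is central of exponent `n`. For `h ∈ H` and `g ∈ G`
the commutator `[h,g]` lies in `H ∩ [G,G] ⊆ H ∩ M ⊆ N`, so it is central modulo `K` and
`[hⁿ,g] ≡ [h,g]ⁿ ≡ 1`. Hence every `hⁿ` is central modulo `K`, and so is the normal subgroup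
`pₙ(H)` they generate.
-/

/-- `pₙ(H)`: the normal subgroup of `G` generated by the `n`-th powers of elements
of `H`. -/
def pPow {G : Type*} [Group G] (n : ℕ) (H : Subgroup G) : Subgroup G :=
  Subgroup.normalClosure {x | ∃ h ∈ H, x = h ^ n}

open scoped commutatorElement

section

variable {G : Type*} [Group G]

instance pPow_normal (n : ℕ) (H : Subgroup G) : (pPow n H).Normal :=
  Subgroup.normalClosure_normal

theorem commutatorElement_pow_left_of_commute {h g : G} (hc : Commute h ⁅h, g⁆) (n : ℕ) :
    ⁅h ^ n, g⁆ = ⁅h, g⁆ ^ n := by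
  induction n with
  | zero => simp
  | succ k ih =>
    rw [pow_succ', commutatorElement_mul_left_eq_conj_mul, ih, (hc.pow_right k).eq,
      mul_inv_cancel_right, pow_succ]

namespace Subgroup

instance commutator_top_right_normal (N : Subgroup G) : ⁅N, (⊤ : Subgroup G)⁆.Normal :=
  normalizer_eq_top_iff.mp (top_le_iff.mp (normalizer_commutator_ge_right N ⊤))

instance upperCentralSeriesStep_normal (K : Subgroup G) [K.Normal] :
    (upperCentralSeriesStep K).Normal := by
  rw [upperCentralSeriesStep_eq_comap_center]
  infer_instance

theorem commutatorElement_pow_left_mem {K : Subgroup G} [K.Normal] {h g : G}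
    (hc : ⁅h, g⁆ ∈ upperCentralSeriesStep K) {n : ℕ} (hn : ⁅h, g⁆ ^ n ∈ K) :
    ⁅h ^ n, g⁆ ∈ K := by
  rw [upperCentralSeriesStep_eq_comap_center, mem_comap, mem_center_iff,
    map_commutatorElement] at hc
  rw [← QuotientGroup.ker_mk' K, MonoidHom.mem_ker] at hn ⊢
  rwa [map_commutatorElement, map_pow, commutatorElement_pow_left_of_commute (hc _),
    ← map_commutatorElement, ← map_pow]

end Subgroup

end

open Subgroup in
theorem stmt12_general (G : Type*) [Group G] (n : ℕ) (M : Subgroup G)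
    (hder : ⁅(⊤ : Subgroup G), (⊤ : Subgroup G)⁆ ≤ M)
    (N : Subgroup G)
    (H : Subgroup G) [H.Normal] (hHM : H ⊓ M ≤ N) :
    ⁅pPow n H, (⊤ : Subgroup G)⁆ ≤ pPow n N ⊔ ⁅N, (⊤ : Subgroup G)⁆ := by
  set K := pPow n N ⊔ ⁅N, (⊤ : Subgroup G)⁆
  have hNK : N ≤ K.upperCentralSeriesStep := fun a ha y =>
    mem_sup_right (commutator_mem_commutator ha (mem_top y))
  have hHN : ∀ h ∈ H, ∀ g, ⁅h, g⁆ ∈ N := fun h hh g =>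
    hHM ⟨commutator_le_left H ⊤ (commutator_mem_commutator hh (mem_top g)),
      hder (commutator_mem_commutator (mem_top h) (mem_top g))⟩
  have hHK : pPow n H ≤ K.upperCentralSeriesStep := by
    refine normalClosure_le_normal ?_
    rintro _ ⟨h, hh, rfl⟩ g
    exact commutatorElement_pow_left_mem (hNK (hHN h hh g))
      (mem_sup_left (subset_normalClosure ⟨_, hHN h hh g, rfl⟩))
  exact commutator_le.mpr fun x hx g _ => hHK hx g

/-- Let `G` be a metabelian group with metabelian decomposition
`0 → M → G → A → 1` (`M` a normal abelian subgroup containing `[G,G]`, `A = G/M` a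
finitely generated abelian group) and let `Iₙ = ker(ℤ[A] → ℤ/n)`. Let `H` be a normal
subgroup of `G` and `N` a `ℤ[A]`-submodule of `M` (i.e. a normal subgroup of `G`
contained in `M`) with `H ∩ M ⊆ N`. Then `[pₙ(H), G] ⊆ N·Iₙ`, where `pₙ(H)` is the
normal subgroup generated by `{hⁿ : h ∈ H}`. (Here `N·Iₙ = pₙ(N)·[N,G]`, since
`Iₙ = I + (n)` with `I` the augmentation ideal and `m·(g−1) = [m,g]`, `m·n = mⁿ`.) -/
theorem stmt12 (G : Type*) [Group G] (n : ℕ) (M : Subgroup G) [M.Normal]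
    (hab : ∀ x ∈ M, ∀ y ∈ M, x * y = y * x)
    (hder : ⁅(⊤ : Subgroup G), (⊤ : Subgroup G)⁆ ≤ M)
    (hfg : Group.FG (G ⧸ M))
    (N : Subgroup G) [N.Normal] (hNM : N ≤ M)
    (H : Subgroup G) [H.Normal] (hHM : H ⊓ M ≤ N) :
    ⁅pPow n H, (⊤ : Subgroup G)⁆ ≤ pPow n N ⊔ ⁅N, (⊤ : Subgroup G)⁆ :=
  stmt12_general G n M hder N H hHM
end

section
/- Let G be a finitely generated metabelian group with decomposition 0 → M → G → A → 1 (A finitely generated abelian), Iₙ = ker(Z[A] → Z/n), and let γᵢ^[n](G) be the n-lower central series. Let T be such that a^(n^(T+1)) = 1 implies a^(n^T) = 1 for a ∈ A. Then for all i ≥ 0: M·Iₙⁱ ⊆ γ^[n]_{i+1}(G) ∩ M and γ^[n]_{2i+T+1}(G) ∩ M ⊆ M·Iₙⁱ. -/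
/-!
Since `G ⧸ M` is abelian, `γ^[n]_{j+1}(G)` maps into the `n^j`-th powers of `G ⧸ M`, and every
element of `Pn n H` is `h ^ n * m` with `h ∈ H`, `m ∈ H ⊓ M`. For normal `H`, modulo
`P = Pn n (H ⊓ M)` the subgroup `H ⊓ M` is central of exponent `n` and contains `[H, G]`; so `H`
has class two there, `h ↦ h ^ (n ^ 2)` is a homomorphism on `H` (as `n ∣ (n ^ 2).choose 2`), and
every generator of `Pn n (Pn n H)` is congruent to some `h ^ (n ^ 2)`. If such an element lies in
`M`, the image of `h` in `G ⧸ M` is `n ^ 2`-torsion; for `H = γ^[n]_{2i+T+1}(G)` this image is an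
`n ^ (2i+T)`-th power, so the hypothesis on `T` kills it, `h ∈ H ⊓ M` and `h ^ (n ^ 2) ∈ P`.
Thus two steps of the `n`-lower central series, intersected with `M`, are bounded by one step
of `M·Iₙ^•`, and the second inclusion follows by induction; the first is monotonicity of `Pn`.
-/

/-- `𝒫ₙ(H) = pₙ(H)·[H,G]`: the normal subgroup generated by `n`-th powers of
elements of `H` together with the commutator `[H,G]`. -/
def Pn {G : Type*} [Group G] (n : ℕ) (H : Subgroup G) : Subgroup G :=
  Subgroup.normalClosure {x | ∃ h ∈ H, x = h ^ n} ⊔ ⁅H, (⊤ : Subgroup G)⁆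

/-- The `n`-lower central series: `γ₁^[n](G) = G`, `γ^[n]_{i+1}(G) = 𝒫ₙ(γᵢ^[n](G))`.
Here `gammaN n i = γ^[n]_{i+1}(G)` (zero-based indexing). -/
def gammaN {G : Type*} [Group G] (n : ℕ) : ℕ → Subgroup G
  | 0 => ⊤
  | i + 1 => Pn n (gammaN n i)

/-- `M·Iₙⁱ`, realized group-theoretically via `N·Iₙ = 𝒫ₙ(N)`:
`MIn n M 0 = M` and `MIn n M (i+1) = 𝒫ₙ(MIn n M i)`. -/
def MIn {G : Type*} [Group G] (n : ℕ) (M : Subgroup G) : ℕ → Subgroup G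
  | 0 => M
  | i + 1 => Pn n (MIn n M i)

open scoped commutatorElement

section Pn

open Subgroup

variable {G : Type*} [Group G] {n : ℕ}

lemma pow_mem_Pn {H : Subgroup G} {h : G} (hh : h ∈ H) : h ^ n ∈ Pn n H :=
  le_sup_left (α := Subgroup G) (subset_normalClosure ⟨h, hh, rfl⟩)

lemma commutatorElement_mem_Pn {H : Subgroup G} {h : G} (hh : h ∈ H) (g : G) :
    ⁅h, g⁆ ∈ Pn n H :=
  le_sup_right (α := Subgroup G) (commutator_mem_commutator hh (mem_top g))

lemma Pn_le {H K : Subgroup G} [K.Normal] (hpow : ∀ h ∈ H, h ^ n ∈ K)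
    (hcomm : ∀ h ∈ H, ∀ g : G, ⁅h, g⁆ ∈ K) : Pn n H ≤ K :=
  sup_le (normalClosure_le_normal (by rintro _ ⟨h, hh, rfl⟩; exact hpow h hh))
    (commutator_le.2 fun h hh g _ => hcomm h hh g)

lemma Pn_mono {H K : Subgroup G} (hHK : H ≤ K) : Pn n H ≤ Pn n K :=
  sup_le_sup (normalClosure_mono (by rintro _ ⟨h, hh, rfl⟩; exact ⟨h, hHK hh, rfl⟩))
    (commutator_mono hHK le_rfl)

instance Pn_normal (H : Subgroup G) [H.Normal] : (Pn n H).Normal :=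
  sup_normal _ _

lemma Pn_le_self {H : Subgroup G} [H.Normal] : Pn n H ≤ H :=
  sup_le (normalClosure_le_normal (by rintro _ ⟨h, hh, rfl⟩; exact H.pow_mem hh n))
    (commutator_le_left H ⊤)

lemma commute_mk_Pn {L : Subgroup G} [L.Normal] {m : G} (hm : m ∈ L) (q : G ⧸ Pn n L) :
    Commute (m : G ⧸ Pn n L) q := by
  induction q using QuotientGroup.induction_on with
  | H g =>
    rw [← commutatorElement_eq_one_iff_commute]
    exact (map_commutatorElement (QuotientGroup.mk' (Pn n L)) m g).symm.trans
      ((QuotientGroup.eq_one_iff _).2 (commutatorElement_mem_Pn hm g))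

lemma mk_pow_Pn_eq_one {L : Subgroup G} [L.Normal] {m : G} (hm : m ∈ L) :
    (m : G ⧸ Pn n L) ^ n = 1 := by
  rw [← QuotientGroup.mk_pow, QuotientGroup.eq_one_iff]
  exact pow_mem_Pn hm

lemma gammaN_normal (j : ℕ) : (gammaN n j : Subgroup G).Normal := by
  induction j with
  | zero => exact normal_top
  | succ j ih => exact Pn_normal _

lemma MIn_le_gammaN (M : Subgroup G) (j : ℕ) : MIn n M j ≤ gammaN n j := by
  induction j with
  | zero => exact le_top
  | succ j ih => exact Pn_mono ih

lemma MIn_le_self (M : Subgroup G) [M.Normal] (j : ℕ) : MIn n M j ≤ M := by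
  induction j with
  | zero => exact le_rfl
  | succ j ih => exact (Pn_mono ih).trans Pn_le_self

end Pn

section ClassTwo

variable {Q : Type*} [Group Q] {x y c : Q}

lemma pow_mul_eq_mul_pow_mul_pow_of_central (hc : ∀ z, Commute c z) (h : y * x = x * y * c)
    (k : ℕ) : y ^ k * x = x * y ^ k * c ^ k := by
  induction k with
  | zero => simp
  | succ k ih =>
    calc y ^ (k + 1) * x = y * (y ^ k * x) := by group
      _ = x * y * (c * y ^ k) * c ^ k := by rw [ih, ← mul_assoc, ← mul_assoc, h]; group
      _ = x * y ^ (k + 1) * c ^ (k + 1) := by rw [(hc _).eq]; group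

lemma mul_pow_of_central (hc : ∀ z, Commute c z) (h : y * x = x * y * c) (k : ℕ) :
    (x * y) ^ k = x ^ k * y ^ k * c ^ k.choose 2 := by
  induction k with
  | zero => simp
  | succ k ih =>
    calc (x * y) ^ (k + 1) = x ^ k * (y ^ k * x) * y * c ^ k.choose 2 := by
          rw [pow_succ, ih, mul_assoc _ (c ^ _), ((hc _).pow_left _).eq]; group
      _ = x ^ (k + 1) * y ^ k * (c ^ k * y) * c ^ k.choose 2 := by
          rw [pow_mul_eq_mul_pow_mul_pow_of_central hc h]; group
      _ = x ^ (k + 1) * y ^ (k + 1) * c ^ (k + 1).choose 2 := by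
          rw [((hc _).pow_left _).eq, Nat.choose_succ_succ', Nat.choose_one_right]; group

lemma commutatorElement_mul_left_of_central {z : Q} (hc : ∀ w, Commute c w) :
    ⁅x * c, z⁆ = ⁅x, z⁆ := by
  rw [commutatorElement_def, commutatorElement_def, mul_assoc x c, (hc z).eq]
  group

lemma commutatorElement_pow_left_of_central {z : Q} (hc : ∀ w, Commute ⁅x, z⁆ w) (k : ℕ) :
    ⁅x ^ k, z⁆ = ⁅x, z⁆ ^ k := by
  induction k with
  | zero => simp
  | succ k ih =>
    calc ⁅x ^ (k + 1), z⁆ = x * ⁅x ^ k, z⁆ * x⁻¹ * ⁅x, z⁆ := by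
          simp only [commutatorElement_def]; group
      _ = ⁅x, z⁆ ^ (k + 1) := by
          rw [ih, ((hc x).pow_left k).symm.eq, pow_succ]; group

lemma dvd_choose_two_sq (n : ℕ) : n ∣ (n ^ 2).choose 2 := by
  rw [Nat.choose_two_right]
  apply Nat.dvd_div_of_mul_dvd
  have h2 : 2 ∣ n * (n ^ 2 - 1) := by
    rcases Nat.even_or_odd n with hn | hn
    · exact hn.two_dvd.mul_right _
    · exact (Nat.Odd.sub_odd hn.pow odd_one).two_dvd.mul_left _
  rw [mul_comm 2, sq n, mul_assoc, ← sq]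
  exact mul_dvd_mul_left n h2

lemma mul_pow_sq_of_central {n : ℕ} (hc : ∀ z, Commute c z) (h : y * x = x * y * c)
    (hcn : c ^ n = 1) : (x * y) ^ (n ^ 2) = x ^ (n ^ 2) * y ^ (n ^ 2) := by
  obtain ⟨t, ht⟩ := dvd_choose_two_sq n
  rw [mul_pow_of_central hc h, ht, pow_mul, hcn, one_pow, mul_one]

end ClassTwo

section Abelian

variable {G A : Type*} [Group G] [CommGroup A] (f : G →* A) {n : ℕ}

lemma Pn_le_comap_map_pow (H : Subgroup G) :
    Pn n H ≤ ((H.map f).map (powMonoidHom n)).comap f :=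
  Pn_le (fun h hh => ⟨f h, ⟨h, hh, rfl⟩, (map_pow f h n).symm⟩) fun h _ g => by
    rw [Subgroup.mem_comap, map_commutatorElement,
      commutatorElement_eq_one_iff_commute.2 (Commute.all _ _)]
    exact one_mem _

lemma gammaN_le_comap_range_pow (j : ℕ) :
    gammaN n j ≤ (powMonoidHom (n ^ j) : A →* A).range.comap f := by
  induction j with
  | zero => exact fun x _ => ⟨f x, by simp⟩
  | succ j ih =>
    refine (Pn_le_comap_map_pow f _).trans (Subgroup.comap_mono ?_)
    rintro _ ⟨_, ⟨x, hx, rfl⟩, rfl⟩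
    obtain ⟨a, ha⟩ := ih hx
    exact ⟨a, by simp [← ha, ← pow_mul, pow_succ]⟩

end Abelian

section TwoSteps

variable {G A : Type*} [Group G] [CommGroup A] (f : G →* A) (n : ℕ) (H : Subgroup G) [H.Normal]

lemma commutatorElement_mem_inf_ker {h : G} (hh : h ∈ H) (g : G) : ⁅h, g⁆ ∈ H ⊓ f.ker :=
  ⟨Subgroup.commutator_le_left H ⊤ (Subgroup.commutator_mem_commutator hh (Subgroup.mem_top g)),
    MonoidHom.mem_ker.2 <| by
      rw [map_commutatorElement, commutatorElement_eq_one_iff_commute]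
      exact Commute.all _ _⟩

lemma exists_pow_mul_eq_of_mem_Pn {k : G} (hk : k ∈ Pn n H) :
    ∃ h ∈ H, ∃ m ∈ H ⊓ f.ker, h ^ n * m = k := by
  obtain ⟨_, ⟨h, hh, rfl⟩, hfk⟩ := Pn_le_comap_map_pow f H hk
  refine ⟨h, hh, (h ^ n)⁻¹ * k,
    ⟨H.mul_mem (H.inv_mem (H.pow_mem hh n)) (Pn_le_self hk), MonoidHom.mem_ker.2 ?_⟩,
    mul_inv_cancel_left _ _⟩
  rw [map_mul, map_inv, map_pow, ← hfk, powMonoidHom_apply, inv_mul_cancel]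

def powSqHom : H →* G ⧸ Pn n (H ⊓ f.ker) :=
  MonoidHom.mk' (fun h => ((h : G) : G ⧸ Pn n (H ⊓ f.ker)) ^ (n ^ 2)) fun a b => by
    have hc := commutatorElement_mem_inf_ker f H (H.inv_mem b.2) (a : G)⁻¹
    rw [Subgroup.coe_mul, QuotientGroup.mk_mul]
    refine mul_pow_sq_of_central (commute_mk_Pn hc) ?_ (mk_pow_Pn_eq_one hc)
    simp only [← QuotientGroup.mk_mul]
    congr 1
    group

lemma powSqHom_apply (h : H) : powSqHom f n H h = ((h : G) : G ⧸ Pn n (H ⊓ f.ker)) ^ (n ^ 2) :=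
  rfl

instance powSqHom_range_normal : (powSqHom f n H).range.Normal where
  conj_mem := by
    rintro _ ⟨h, rfl⟩ q
    induction q using QuotientGroup.induction_on with
    | H g =>
      refine ⟨⟨g * h * g⁻¹, ‹H.Normal›.conj_mem _ h.2 g⟩, ?_⟩
      simp only [powSqHom_apply, QuotientGroup.mk_mul, QuotientGroup.mk_inv, conj_pow]

lemma Pn_Pn_le_comap_range_powSqHom :
    Pn n (Pn n H) ≤ (powSqHom f n H).range.comap (QuotientGroup.mk' _) := by
  have hmk : ∀ a b : G, ((⁅a, b⁆ : G) : G ⧸ Pn n (H ⊓ f.ker)) =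
      ⁅(a : G ⧸ Pn n (H ⊓ f.ker)), (b : G ⧸ Pn n (H ⊓ f.ker))⁆ :=
    map_commutatorElement (QuotientGroup.mk' _)
  refine Pn_le (fun k hk => ?_) (fun k hk g => ?_) <;>
    obtain ⟨h, hh, m, hm, rfl⟩ := exists_pow_mul_eq_of_mem_Pn f n H hk
  · refine ⟨⟨h, hh⟩, ?_⟩
    rw [powSqHom_apply, QuotientGroup.mk'_apply, QuotientGroup.mk_pow, QuotientGroup.mk_mul,
      (commute_mk_Pn hm _).symm.mul_pow, mk_pow_Pn_eq_one hm, mul_one, QuotientGroup.mk_pow,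
      ← pow_mul, sq]
  · have hc := commutatorElement_mem_inf_ker f H hh g
    have hcentral : ∀ q, Commute ⁅(h : G ⧸ Pn n (H ⊓ f.ker)), (g : G ⧸ Pn n (H ⊓ f.ker))⁆ q :=
      hmk h g ▸ commute_mk_Pn hc
    have : ((⁅h ^ n * m, g⁆ : G) : G ⧸ Pn n (H ⊓ f.ker)) = 1 := by
      rw [hmk, QuotientGroup.mk_mul, commutatorElement_mul_left_of_central (commute_mk_Pn hm),
        QuotientGroup.mk_pow, commutatorElement_pow_left_of_central hcentral, ← hmk,
        mk_pow_Pn_eq_one hc]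
    rw [Subgroup.mem_comap, QuotientGroup.mk'_apply, this]
    exact one_mem _

lemma comap_range_powSqHom_inf_ker_le (hT : ∀ h ∈ H, f h ^ (n ^ 2) = 1 → f h = 1) :
    (powSqHom f n H).range.comap (QuotientGroup.mk' _) ⊓ f.ker ≤ Pn n (H ⊓ f.ker) := by
  rintro x ⟨⟨h, hx⟩, hfx⟩
  have hP : Pn n (H ⊓ f.ker) ≤ f.ker := Pn_le_self.trans inf_le_right
  have hfh : f h ^ (n ^ 2) = 1 := by
    simpa [powSqHom_apply, QuotientGroup.lift_mk] using
      (congrArg (QuotientGroup.lift _ f hP) hx).trans hfx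
  have hh : (h : G) ∈ H ⊓ f.ker := ⟨h.2, hT h h.2 hfh⟩
  rw [← QuotientGroup.eq_one_iff, ← QuotientGroup.mk'_apply, ← hx, powSqHom_apply, sq, pow_mul,
    mk_pow_Pn_eq_one hh, one_pow]

lemma Pn_Pn_inf_ker_le (hT : ∀ h ∈ H, f h ^ (n ^ 2) = 1 → f h = 1) :
    Pn n (Pn n H) ⊓ f.ker ≤ Pn n (H ⊓ f.ker) :=
  (inf_le_inf_right _ (Pn_Pn_le_comap_range_powSqHom f n H)).trans
    (comap_range_powSqHom_inf_ker_le f n H hT)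

end TwoSteps

lemma pow_pow_eq_one_of_pow_pow_add_eq_one {A : Type*} [Monoid A] {n T : ℕ}
    (hT : ∀ a : A, a ^ n ^ (T + 1) = 1 → a ^ n ^ T = 1) (d : ℕ) {a : A}
    (ha : a ^ n ^ (T + d) = 1) : a ^ n ^ T = 1 := by
  induction d generalizing a with
  | zero => exact ha
  | succ d ih =>
    refine hT a ?_
    rw [pow_succ', pow_mul]
    exact ih (by rw [← pow_mul, ← pow_succ']; exact ha)

theorem gammaN_inf_ker_le_MIn {G A : Type*} [Group G] [CommGroup A] (f : G →* A) {n T : ℕ}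
    (hT : ∀ a : A, a ^ n ^ (T + 1) = 1 → a ^ n ^ T = 1) (i : ℕ) :
    gammaN n (2 * i + T) ⊓ f.ker ≤ MIn n f.ker i := by
  induction i with
  | zero => exact inf_le_right
  | succ i ih =>
    have := gammaN_normal (G := G) (n := n) (2 * i + T)
    have hTH : ∀ h ∈ gammaN n (2 * i + T), f h ^ (n ^ 2) = 1 → f h = 1 := by
      intro h hh hpow
      obtain ⟨a, ha⟩ := gammaN_le_comap_range_pow f _ hh
      rw [← ha, powMonoidHom_apply, ← pow_mul, ← pow_add] at hpow
      have haT : a ^ n ^ T = 1 := pow_pow_eq_one_of_pow_pow_add_eq_one hT (2 * i + 2)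
        (by rwa [show 2 * i + T + 2 = T + (2 * i + 2) by ring] at hpow)
      rw [← ha, powMonoidHom_apply, add_comm, pow_add, pow_mul, haT, one_pow]
    rw [show 2 * (i + 1) + T = 2 * i + T + 1 + 1 by ring]
    exact (Pn_Pn_inf_ker_le f n _ hTH).trans (Pn_mono ih)

theorem stmt13_general (G : Type*) [Group G] (n : ℕ)
    (M : Subgroup G) [M.Normal]
    (hder : ⁅(⊤ : Subgroup G), (⊤ : Subgroup G)⁆ ≤ M)
    (T : ℕ) (hT : ∀ a : G ⧸ M, a ^ n ^ (T + 1) = 1 → a ^ n ^ T = 1)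
    (i : ℕ) :
    MIn n M i ≤ gammaN n i ⊓ M ∧ gammaN n (2 * i + T) ⊓ M ≤ MIn n M i := by
  have : IsMulCommutative (G ⧸ M) :=
    Subgroup.Normal.quotient_commutative_iff_commutator_le.2 hder
  refine ⟨le_inf (MIn_le_gammaN M i) (MIn_le_self M i), ?_⟩
  open scoped IsMulCommutative in
  simpa only [QuotientGroup.ker_mk'] using gammaN_inf_ker_le_MIn (QuotientGroup.mk' M) hT i

/-- Let `G` be a finitely generated metabelian group with decomposition
`0 → M → G → A → 1` (`A = G/M` finitely generated abelian), `Iₙ = ker(ℤ[A] → ℤ/n)`,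
and let `γᵢ^[n](G)` be the `n`-lower central series. Let `T` be such that
`a^(n^(T+1)) = 1` implies `a^(n^T) = 1` for `a ∈ A`. Then for all `i ≥ 0`:
`M·Iₙⁱ ⊆ γ^[n]_{i+1}(G) ∩ M` and `γ^[n]_{2i+T+1}(G) ∩ M ⊆ M·Iₙⁱ`.
(`γ^[n]_{i+1}(G) = gammaN n i` and `M·Iₙⁱ = MIn n M i` in the notation above.) -/
theorem stmt13 (G : Type*) [Group G] [Group.FG G] (n : ℕ) (hn : 1 ≤ n)
    (M : Subgroup G) [M.Normal]
    (hab : ∀ x ∈ M, ∀ y ∈ M, x * y = y * x)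
    (hder : ⁅(⊤ : Subgroup G), (⊤ : Subgroup G)⁆ ≤ M)
    (T : ℕ) (hT : ∀ a : G ⧸ M, a ^ n ^ (T + 1) = 1 → a ^ n ^ T = 1)
    (i : ℕ) :
    MIn n M i ≤ gammaN n i ⊓ M ∧ gammaN n (2 * i + T) ⊓ M ≤ MIn n M i :=
  stmt13_general G n M hder T hT i
end
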